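/- arXiv:1307.7219 — 4 statements merged into one kernel-verified Lean document; each statement's English description precedes it below -/
import Mathlib

section
/- Let T_m ∈ ℂ^{m×m} be an unreduced tridiagonal matrix with eigenvalues λ_1, ..., λ_m, let f be analytic in a neighborhood of its spectrum, and write f(T_m) = Σ_{i=0}^{m−1} a_i T_m^i for the interpolating polynomial representation. Then the (m,1) entry of f(T_m) equals a_{m−1} times the (m,1) entry of T_m^{m−1}; in particular e_m^T f(T_m) e_1 = f[λ_1, ..., λ_m] · ∏_{j=1}^{m−1} t_{j+1,j}, where f[λ_1,...,λ_m] is the divided difference of f at the eigenvalues. -/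
open MeasureTheory Matrix Polynomial

/-- Divided difference in the Hermite sense, via the Hermite–Genocchi formula. -/
noncomputable def divDiff (f : ℂ → ℂ) (k : ℕ) (z : Fin (k + 1) → ℂ) : ℂ :=
  ∫ t in {t : Fin k → ℝ | (∀ i, 0 ≤ t i) ∧ ∑ i, t i ≤ 1},
    iteratedDeriv k f (z 0 + ∑ i, (t i : ℂ) * (z i.succ - z 0))

/-!
Since `T` has a single subdiagonal, the entry `(m, 1)` of `T ^ i` vanishes for `i < m - 1`,
and for `i = m - 1` it is the product of the subdiagonal entries; this gives the first identity.

For the second, the Hermite–Genocchi integral satisfies the divided-difference recurrence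
`(z_{j+1} - z_0) g[z_0, …, z_{k+1}] = g[z without z_0] - g[z without z_{j+1}]`
(integrate out the `j`-th simplex coordinate by the fundamental theorem of calculus), so by
induction on `k` it vanishes whenever `g` vanishes at each node to the order of its
multiplicity. Applied to `g = f - p`, where `p = ∑ aᵢ Xⁱ` is the Hermite interpolant of `f` at
the eigenvalues, this gives `f[λ] = p[λ] = a_{m-1}`, the last equality because
`p^{(m-1)} ≡ (m-1)! a_{m-1}` and the simplex has volume `1 / (m-1)!`.
-/

open scoped Finset Nat

namespace Matrix

variable {R : Type*} [CommSemiring R]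

theorem pow_apply_eq_zero_of_add_lt {n : ℕ} {T : Matrix (Fin n) (Fin n) R}
    (hT : ∀ i j : Fin n, (j : ℕ) + 1 < i → T i j = 0)
    (p : ℕ) {i j : Fin n} (hij : (j : ℕ) + p < i) : (T ^ p) i j = 0 := by
  induction p generalizing i with
  | zero => exact one_apply_ne (Fin.ne_of_gt hij)
  | succ p ih =>
    rw [pow_succ', mul_apply]
    refine Finset.sum_eq_zero fun l _ => ?_
    rcases lt_or_ge ((j : ℕ) + p) l with hl | hl
    · rw [ih hl, mul_zero]
    · rw [hT i l (by omega), zero_mul]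

theorem pow_apply_zero_eq_prod {k : ℕ} {T : Matrix (Fin (k + 1)) (Fin (k + 1)) R}
    (hT : ∀ i j : Fin (k + 1), (j : ℕ) + 1 < i → T i j = 0) {p : ℕ} (hp : p ≤ k) :
    (T ^ p) ⟨p, by omega⟩ 0 = ∏ m : Fin p, T ⟨m + 1, by omega⟩ ⟨m, by omega⟩ := by
  induction p with
  | zero => simp
  | succ p ih =>
    rw [pow_succ', mul_apply, Finset.sum_eq_single ⟨p, by omega⟩, ih (by omega),
      Fin.prod_univ_castSucc, mul_comm]
    · rfl
    · intro l _ hl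
      rcases lt_or_gt_of_ne (Fin.val_ne_of_ne hl) with hlt | hgt
      · rw [hT _ _ (by simp; omega), zero_mul]
      · rw [pow_apply_eq_zero_of_add_lt hT p (by simpa using hgt), mul_zero]
    · simp

theorem pow_apply_last_zero {k : ℕ} {T : Matrix (Fin (k + 1)) (Fin (k + 1)) R}
    (hT : ∀ i j : Fin (k + 1), (j : ℕ) + 1 < i → T i j = 0) :
    (T ^ k) (Fin.last k) 0 = ∏ j : Fin k, T j.succ j.castSucc :=
  pow_apply_zero_eq_prod hT le_rfl

theorem sum_smul_pow_apply_last_zero {k : ℕ} {T : Matrix (Fin (k + 1)) (Fin (k + 1)) R}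
    (hT : ∀ i j : Fin (k + 1), (j : ℕ) + 1 < i → T i j = 0) (a : Fin (k + 1) → R) :
    (∑ i : Fin (k + 1), a i • T ^ (i : ℕ)) (Fin.last k) 0 =
      a (Fin.last k) * (T ^ k) (Fin.last k) 0 := by
  rw [sum_apply, Fin.sum_univ_castSucc, Finset.sum_eq_zero, zero_add]
  · simp
  · intro i _
    rw [smul_apply, pow_apply_eq_zero_of_add_lt hT _ (by simp), smul_zero]

end Matrix

def unitSimplex (k : ℕ) : Set (Fin k → ℝ) := {t | (∀ i, 0 ≤ t i) ∧ ∑ i, t i ≤ 1}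

theorem isClosed_unitSimplex (k : ℕ) : IsClosed (unitSimplex k) :=
  (isClosed_le continuous_const continuous_id).inter
    (isClosed_le (continuous_finsetSum _ fun i _ => continuous_apply i) continuous_const)

theorem measurableSet_unitSimplex (k : ℕ) : MeasurableSet (unitSimplex k) :=
  (isClosed_unitSimplex k).measurableSet

theorem isCompact_unitSimplex (k : ℕ) : IsCompact (unitSimplex k) := by
  refine (isCompact_univ_pi fun _ => isCompact_Icc (a := (0 : ℝ)) (b := 1)).of_isClosed_subset
    (isClosed_unitSimplex k) fun t ht i _ => ⟨ht.1 i, le_trans ?_ ht.2⟩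
  exact Finset.single_le_sum (fun i _ => ht.1 i) (Finset.mem_univ i)

theorem insertNth_mem_unitSimplex_iff {k : ℕ} (j : Fin (k + 1)) (s : ℝ) (u : Fin k → ℝ) :
    j.insertNth s u ∈ unitSimplex (k + 1) ↔
      u ∈ unitSimplex k ∧ s ∈ Set.Icc 0 (1 - ∑ i, u i) := by
  simp only [unitSimplex, Set.mem_ofPred_eq, Fin.forall_iff_succAbove j,
    Fin.sum_univ_succAbove _ j, Fin.insertNth_apply_same, Fin.insertNth_apply_succAbove,
    Set.mem_Icc]
  constructor
  · rintro ⟨⟨hs, hu⟩, hsum⟩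
    have := Finset.sum_nonneg fun i (_ : i ∈ Finset.univ) => hu i
    exact ⟨⟨hu, by linarith⟩, hs, by linarith⟩
  · rintro ⟨⟨hu, -⟩, hs, hsu⟩
    exact ⟨⟨hs, hu⟩, by linarith⟩

theorem setIntegral_unitSimplex_succ {E : Type*} [NormedAddCommGroup E] [NormedSpace ℝ E]
    {k : ℕ} (j : Fin (k + 1)) {F : (Fin (k + 1) → ℝ) → E}
    (hF : IntegrableOn F (unitSimplex (k + 1))) :
    ∫ t in unitSimplex (k + 1), F t =
      ∫ u in unitSimplex k, ∫ s in Set.Icc 0 (1 - ∑ i, u i), F (j.insertNth s u) := by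
  classical
  have he := (volume_preserving_piFinSuccAbove (fun _ : Fin (k + 1) => ℝ) j).symm
  set G := (unitSimplex (k + 1)).indicator F with hG_def
  have hG : Integrable (fun p : ℝ × (Fin k → ℝ) => G (j.insertNth p.1 p.2))
      (volume.prod volume) :=
    he.integrable_comp_emb (MeasurableEquiv.measurableEmbedding _) |>.2
      ((integrable_indicator_iff (measurableSet_unitSimplex _)).2 hF)
  have hslice : ∀ u, ∫ s, G (j.insertNth s u) = (unitSimplex k).indicator
      (fun u => ∫ s in Set.Icc 0 (1 - ∑ i, u i), F (j.insertNth s u)) u := by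
    intro u
    by_cases hu : u ∈ unitSimplex k
    · rw [Set.indicator_of_mem hu, ← integral_indicator measurableSet_Icc]
      congr 1 with s
      rw [hG_def, Set.indicator_apply, Set.indicator_apply, insertNth_mem_unitSimplex_iff]
      simp only [hu, true_and]
    · simp [hG_def, insertNth_mem_unitSimplex_iff, hu]
  calc ∫ t in unitSimplex (k + 1), F t = ∫ t, G t :=
        (integral_indicator (measurableSet_unitSimplex _)).symm
    _ = ∫ p : ℝ × (Fin k → ℝ), G (j.insertNth p.1 p.2) :=
        (he.integral_comp (MeasurableEquiv.measurableEmbedding _) G).symm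
    _ = ∫ u, ∫ s, G (j.insertNth s u) := integral_prod_symm _ hG
    _ = _ := by simp_rw [hslice]; exact integral_indicator (measurableSet_unitSimplex k)

theorem setIntegral_unitSimplex_one_sub_sum_pow (k r : ℕ) :
    ∫ t in unitSimplex k, (1 - ∑ i, t i) ^ r = (r ! / (r + k)! : ℝ) := by
  induction k generalizing r with
  | zero =>
    have : unitSimplex 0 = Set.univ := by ext t; simp [unitSimplex]
    simp [this, measureReal_def, volume_pi, (Nat.factorial_pos r).ne']
  | succ k ih =>
    have hcont : Continuous fun t : Fin (k + 1) → ℝ => (1 - ∑ i, t i) ^ r := by fun_prop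
    have hinner : ∀ u ∈ unitSimplex k, ∫ s in Set.Icc 0 (1 - ∑ i, u i),
        (1 - ∑ i, (0 : Fin (k + 1)).insertNth s u i) ^ r =
          (1 - ∑ i, u i) ^ (r + 1) / (r + 1) := by
      intro u hu
      have hsum : ∀ s : ℝ,
          1 - ∑ i, (0 : Fin (k + 1)).insertNth s u i = (1 - ∑ i, u i) - s := by
        intro s; rw [Fin.sum_insertNth]; ring
      simp_rw [hsum]
      rw [integral_Icc_eq_integral_Ioc, ← intervalIntegral.integral_of_le (sub_nonneg.2 hu.2),
        intervalIntegral.integral_comp_sub_left (fun x => x ^ r)]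
      simp
    rw [setIntegral_unitSimplex_succ 0
        (hcont.continuousOn.integrableOn_compact (isCompact_unitSimplex _)),
      setIntegral_congr_fun (measurableSet_unitSimplex k) hinner, integral_div, ih,
      show r + 1 + k = r + (k + 1) by omega]
    push_cast [Nat.factorial_succ]
    field_simp

theorem measureReal_unitSimplex (k : ℕ) : volume.real (unitSimplex k) = 1 / k ! := by
  simpa using setIntegral_unitSimplex_one_sub_sum_pow k 0

theorem rootMultiplicity_prod_X_sub_C {R ι : Type*} [CommRing R] [IsDomain R] [DecidableEq R]
    [Fintype ι] (z : ι → R) (μ : R) :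
    (∏ i, (X - C (z i))).rootMultiplicity μ = #{i | z i = μ} := by
  rw [← count_roots, roots_prod _ _ (Finset.prod_ne_zero_iff.2 fun i _ => X_sub_C_ne_zero _)]
  simp only [roots_X_sub_C, Multiset.bind_singleton, Multiset.count_map]
  simp_rw [eq_comm (a := μ)]
  rfl

theorem card_filter_comp_le_of_injective {α β : Type*} [Fintype α] [Fintype β] {π : α → β}
    (hπ : Function.Injective π) (p : β → Prop) [DecidablePred p] :
    #{a | p (π a)} ≤ #{b | p b} :=
  Finset.card_le_card_of_injOn π (fun a ha => by simpa using ha) hπ.injOn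

theorem Polynomial.iteratedDeriv_eval {𝕜 : Type*} [NontriviallyNormedField 𝕜] (p : 𝕜[X])
    (n : ℕ) :
    iteratedDeriv n (fun w => p.eval w) = fun w => (derivative^[n] p).eval w := by
  induction n with
  | zero => rfl
  | succ n ih =>
    ext w
    rw [iteratedDeriv_succ, ih, Function.iterate_succ_apply', Polynomial.deriv]

theorem Polynomial.iterate_derivative_of_natDegree_le {R : Type*} [CommSemiring R] {p : R[X]}
    {k : ℕ} (hp : p.natDegree ≤ k) : derivative^[k] p = C (k ! • p.coeff k) := by
  rw [eq_C_of_natDegree_le_zero ((natDegree_iterate_derivative p k).trans (by omega)),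
    coeff_iterate_derivative, zero_add, Nat.descFactorial_self]

theorem AnalyticOnNhd.iteratedDeriv {𝕜 F : Type*} [NontriviallyNormedField 𝕜]
    [NormedAddCommGroup F] [NormedSpace 𝕜 F] [CompleteSpace F] {U : Set 𝕜} {g : 𝕜 → F}
    (hg : AnalyticOnNhd 𝕜 g U) (n : ℕ) : AnalyticOnNhd 𝕜 (iteratedDeriv n g) U := by
  simpa only [iteratedDeriv_eq_iterate] using hg.iterated_deriv n

def simplexPoint {k : ℕ} (z : Fin (k + 1) → ℂ) (t : Fin k → ℝ) : ℂ :=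
  z 0 + ∑ i, (t i : ℂ) * (z i.succ - z 0)

theorem divDiff_eq_setIntegral (g : ℂ → ℂ) (k : ℕ) (z : Fin (k + 1) → ℂ) :
    divDiff g k z = ∫ t in unitSimplex k, iteratedDeriv k g (simplexPoint z t) :=
  rfl

theorem continuous_simplexPoint {k : ℕ} (z : Fin (k + 1) → ℂ) :
    Continuous (simplexPoint z) := by
  unfold simplexPoint; fun_prop

theorem simplexPoint_mem {U : Set ℂ} (hU : Convex ℝ U) {k : ℕ} {z : Fin (k + 1) → ℂ}
    (hz : ∀ i, z i ∈ U) {t : Fin k → ℝ} (ht : t ∈ unitSimplex k) :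
    simplexPoint z t ∈ U := by
  have hbary :
      simplexPoint z t = ∑ i, (Fin.cons (1 - ∑ i, t i) t : Fin (k + 1) → ℝ) i • z i := by
    simp only [simplexPoint, Fin.sum_univ_succ, Fin.cons_zero, Fin.cons_succ, Complex.real_smul,
      mul_sub, Finset.sum_sub_distrib, ← Finset.sum_mul]
    push_cast
    ring
  rw [hbary]
  refine hU.sum_mem (fun i _ => ?_) ?_ fun i _ => hz i
  · cases i using Fin.cases with
    | zero => exact sub_nonneg.2 ht.2
    | succ i => exact ht.1 i
  · simp [Fin.sum_univ_succ]

theorem integrableOn_iteratedDeriv_simplexPoint {U : Set ℂ} (hU : Convex ℝ U) {g : ℂ → ℂ}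
    (hg : AnalyticOnNhd ℂ g U) (n : ℕ) {k : ℕ} {z : Fin (k + 1) → ℂ}
    (hz : ∀ i, z i ∈ U) :
    IntegrableOn (fun t => iteratedDeriv n g (simplexPoint z t)) (unitSimplex k) :=
  ContinuousOn.integrableOn_compact (isCompact_unitSimplex k) fun _ ht =>
    ((hg.iteratedDeriv n _ (simplexPoint_mem hU hz ht)).continuousAt.comp
      (continuous_simplexPoint z).continuousAt).continuousWithinAt

theorem divDiff_sub {U : Set ℂ} (hU : Convex ℝ U) {f g : ℂ → ℂ}
    (hf : AnalyticOnNhd ℂ f U) (hg : AnalyticOnNhd ℂ g U) {k : ℕ} {z : Fin (k + 1) → ℂ}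
    (hz : ∀ i, z i ∈ U) :
    divDiff (fun w => f w - g w) k z = divDiff f k z - divDiff g k z := by
  rw [divDiff_eq_setIntegral, divDiff_eq_setIntegral, divDiff_eq_setIntegral,
    ← integral_sub (integrableOn_iteratedDeriv_simplexPoint hU hf k hz)
      (integrableOn_iteratedDeriv_simplexPoint hU hg k hz)]
  refine setIntegral_congr_fun (measurableSet_unitSimplex k) fun t ht => ?_
  have hzt := simplexPoint_mem hU hz ht
  exact iteratedDeriv_fun_sub (hf _ hzt).contDiffAt (hg _ hzt).contDiffAt

theorem divDiff_eval_of_natDegree_le {p : ℂ[X]} {k : ℕ} (hp : p.natDegree ≤ k)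
    (z : Fin (k + 1) → ℂ) : divDiff (fun w => p.eval w) k z = p.coeff k := by
  simp only [divDiff_eq_setIntegral, iteratedDeriv_eval, iterate_derivative_of_natDegree_le hp,
    eval_C, setIntegral_const, measureReal_unitSimplex, nsmul_eq_mul, Complex.real_smul]
  have : (k ! : ℂ) ≠ 0 := Nat.cast_ne_zero.2 k.factorial_ne_zero
  push_cast
  field_simp

theorem mul_integral_deriv_comp_add_mul {h : ℂ → ℂ} {c d : ℂ} {m : ℝ}
    (hh : ∀ s ∈ Set.uIcc 0 m, AnalyticAt ℂ h (c + s * d)) :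
    d * ∫ s in (0 : ℝ)..m, deriv h (c + s * d) = h (c + m * d) - h c := by
  have hline : ∀ x : ℂ, HasDerivAt (fun x : ℂ => c + x * d) d x := fun x => by
    simpa using ((hasDerivAt_id x).mul_const d).const_add c
  rw [← intervalIntegral.integral_const_mul]
  convert intervalIntegral.integral_eq_sub_of_hasDerivAt (f := fun s : ℝ => h (c + s * d))
    (fun s hs => ?_) (ContinuousOn.intervalIntegrable fun s hs => ?_) using 1
  · simp
  · simpa [mul_comm] using
      ((hh s hs).differentiableAt.hasDerivAt.comp (s : ℂ) (hline s)).comp_ofReal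
  · exact (continuousAt_const.mul ((hh s hs).deriv.continuousAt.comp
      (f := fun s : ℝ => c + s * d) (by fun_prop))).continuousWithinAt

theorem simplexPoint_insertNth {k : ℕ} (z : Fin (k + 2) → ℂ) (j : Fin (k + 1)) (s : ℝ)
    (u : Fin k → ℝ) :
    simplexPoint z (j.insertNth s u) =
      simplexPoint (j.succ.removeNth z) u + s * (z j.succ - z 0) := by
  simp only [simplexPoint, Fin.sum_univ_succAbove _ j, Fin.insertNth_apply_same,
    Fin.insertNth_apply_succAbove, Fin.removeNth, Fin.succ_succAbove_zero, Fin.succ_succAbove_succ]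
  ring

theorem simplexPoint_comp_cons {k : ℕ} (z : Fin (k + 2) → ℂ) (j : Fin (k + 1))
    (u : Fin k → ℝ) :
    simplexPoint (z ∘ Fin.cons j.succ (Fin.succ ∘ j.succAbove)) u =
      simplexPoint (j.succ.removeNth z) u + (1 - ∑ i, u i : ℝ) * (z j.succ - z 0) := by
  simp only [simplexPoint, Function.comp_apply, Fin.cons_zero, Fin.cons_succ, Fin.removeNth,
    Fin.succ_succAbove_zero, Fin.succ_succAbove_succ, mul_sub, Finset.sum_sub_distrib,
    ← Finset.sum_mul]
  push_cast
  ring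

/-- The first tuple on the right is `z` without `z 0`, reordered to start at `z j.succ`. -/
theorem sub_mul_divDiff_succ {U : Set ℂ} (hU : Convex ℝ U) {g : ℂ → ℂ}
    (hg : AnalyticOnNhd ℂ g U) {k : ℕ} {z : Fin (k + 2) → ℂ} (hz : ∀ i, z i ∈ U)
    (j : Fin (k + 1)) :
    (z j.succ - z 0) * divDiff g (k + 1) z =
      divDiff g k (z ∘ Fin.cons j.succ (Fin.succ ∘ j.succAbove)) -
        divDiff g k (j.succ.removeNth z) := by
  have hinner : ∀ u ∈ unitSimplex k,
      (z j.succ - z 0) * ∫ s in Set.Icc 0 (1 - ∑ i, u i),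
        iteratedDeriv (k + 1) g (simplexPoint z (j.insertNth s u)) =
      iteratedDeriv k g (simplexPoint (z ∘ Fin.cons j.succ (Fin.succ ∘ j.succAbove)) u) -
        iteratedDeriv k g (simplexPoint (j.succ.removeNth z) u) := by
    intro u hu
    have hmem : ∀ s ∈ Set.uIcc 0 (1 - ∑ i, u i),
        simplexPoint z (j.insertNth s u) ∈ U := fun s hs =>
      simplexPoint_mem hU hz ((insertNth_mem_unitSimplex_iff j s u).2
        ⟨hu, Set.uIcc_of_le (sub_nonneg.2 hu.2) ▸ hs⟩)
    simp_rw [simplexPoint_insertNth, iteratedDeriv_succ] at hmem ⊢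
    rw [integral_Icc_eq_integral_Ioc, ← intervalIntegral.integral_of_le (sub_nonneg.2 hu.2),
      mul_integral_deriv_comp_add_mul fun s hs => hg.iteratedDeriv k _ (hmem s hs),
      simplexPoint_comp_cons]
  calc (z j.succ - z 0) * divDiff g (k + 1) z
      = (z j.succ - z 0) * ∫ u in unitSimplex k, ∫ s in Set.Icc 0 (1 - ∑ i, u i),
          iteratedDeriv (k + 1) g (simplexPoint z (j.insertNth s u)) := by
        rw [divDiff_eq_setIntegral,
          setIntegral_unitSimplex_succ j (integrableOn_iteratedDeriv_simplexPoint hU hg _ hz)]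
    _ = ∫ u in unitSimplex k,
          (iteratedDeriv k g (simplexPoint (z ∘ Fin.cons j.succ (Fin.succ ∘ j.succAbove)) u) -
            iteratedDeriv k g (simplexPoint (j.succ.removeNth z) u)) := by
        rw [← integral_const_mul]
        exact setIntegral_congr_fun (measurableSet_unitSimplex k) hinner
    _ = _ := integral_sub (integrableOn_iteratedDeriv_simplexPoint hU hg k fun _ => hz _)
        (integrableOn_iteratedDeriv_simplexPoint hU hg k fun _ => hz _)

theorem divDiff_eq_zero_of_iteratedDeriv_eq_zero {U : Set ℂ} (hU : Convex ℝ U) {g : ℂ → ℂ}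
    (hg : AnalyticOnNhd ℂ g U) {k : ℕ} {z : Fin (k + 1) → ℂ} (hz : ∀ i, z i ∈ U)
    (hvan : ∀ i, ∀ n < #{i' | z i' = z i}, iteratedDeriv n g (z i) = 0) :
    divDiff g k z = 0 := by
  induction k with
  | zero =>
    have hg0 : g (z 0) = 0 := hvan 0 0 (Finset.card_pos.2 ⟨0, by simp⟩)
    simp [divDiff_eq_setIntegral, simplexPoint, hg0]
  | succ k ih =>
    by_cases hconst : ∀ j : Fin (k + 1), z j.succ = z 0
    · have hmult : k + 1 < #{i | z i = z 0} := by
        rw [Finset.filter_true_of_mem fun i _ => Fin.cases rfl hconst i]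
        simp
      simp [divDiff_eq_setIntegral, simplexPoint, hconst, hvan 0 _ hmult]
    · obtain ⟨j, hj⟩ := not_forall.1 hconst
      have hsub : ∀ π : Fin (k + 1) → Fin (k + 2), Function.Injective π →
          divDiff g k (z ∘ π) = 0 := fun π hπ => ih (fun _ => hz _) fun i n hn =>
        hvan (π i) n (hn.trans_le (card_filter_comp_le_of_injective hπ (z · = z (π i))))
      have hcons :
          Function.Injective (Fin.cons j.succ (Fin.succ ∘ j.succAbove) : Fin (k + 1) → _) :=
        Fin.cons_injective_iff.2 ⟨by simp [Fin.succAbove_ne],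
          (Fin.succ_injective _).comp Fin.succAbove_right_injective⟩
      have hrec := sub_mul_divDiff_succ hU hg hz j
      rw [hsub _ hcons, show j.succ.removeNth z = z ∘ j.succ.succAbove from rfl,
        hsub _ Fin.succAbove_right_injective, sub_self] at hrec
      exact (mul_eq_zero.1 hrec).resolve_left (sub_ne_zero.2 hj)

theorem divDiff_eval_sum_C_mul_X_pow {k : ℕ} (a z : Fin (k + 1) → ℂ) :
    divDiff (fun w => (∑ i : Fin (k + 1), C (a i) * X ^ (i : ℕ)).eval w) k z =
      a (Fin.last k) := by
  rw [divDiff_eval_of_natDegree_le (natDegree_sum_le_of_forall_le _ _ fun i _ =>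
      (natDegree_C_mul_X_pow_le _ _).trans (Nat.lt_succ_iff.1 i.2)),
    finsetSum_coeff, Finset.sum_eq_single_of_mem (Fin.last k) (Finset.mem_univ _)]
  · simp
  · intro i _ hi
    rw [coeff_C_mul_X_pow, if_neg (by simpa [Fin.ext_iff, eq_comm] using hi)]

theorem tridiag_corner_entry_general {k : ℕ} (T : Matrix (Fin (k + 1)) (Fin (k + 1)) ℂ)
    (htri : ∀ i j : Fin (k + 1), ((j : ℕ) + 1 < (i : ℕ) ∨ (i : ℕ) + 1 < (j : ℕ)) → T i j = 0)
    (lam : Fin (k + 1) → ℂ)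
    (hlam : T.charpoly = ∏ i, (Polynomial.X - Polynomial.C (lam i)))
    (f : ℂ → ℂ) (U : Set ℂ) (hUconv : Convex ℝ U)
    (hspec : ∀ i, lam i ∈ U) (hf : ∀ w ∈ U, AnalyticAt ℂ f w)
    (a : Fin (k + 1) → ℂ) (fT : Matrix (Fin (k + 1)) (Fin (k + 1)) ℂ)
    (hfT : fT = ∑ i : Fin (k + 1), a i • T ^ (i : ℕ))
    (hinterp : ∀ μ : ℂ, ∀ j < T.charpoly.rootMultiplicity μ,
      iteratedDeriv j
        (fun w => Polynomial.eval w (∑ i : Fin (k + 1), Polynomial.C (a i) * Polynomial.X ^ (i : ℕ))) μ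
        = iteratedDeriv j f μ) :
    fT (Fin.last k) 0 = a (Fin.last k) * (T ^ k) (Fin.last k) 0
    ∧ fT (Fin.last k) 0 = divDiff f k lam * ∏ j : Fin k, T j.succ j.castSucc := by
  have hT : ∀ i j : Fin (k + 1), (j : ℕ) + 1 < i → T i j = 0 := fun i j h => htri i j (Or.inl h)
  have hcorner : fT (Fin.last k) 0 = a (Fin.last k) * (T ^ k) (Fin.last k) 0 := by
    rw [hfT, sum_smul_pow_apply_last_zero hT]
  set p : ℂ[X] := ∑ i : Fin (k + 1), C (a i) * X ^ (i : ℕ)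
  have hp : AnalyticOnNhd ℂ (fun w => p.eval w) U := fun w _ => p.differentiable.analyticAt w
  have hdiv : divDiff f k lam = a (Fin.last k) := by
    have hvan : divDiff (fun w => f w - p.eval w) k lam = 0 :=
      divDiff_eq_zero_of_iteratedDeriv_eq_zero hUconv (fun w hw => (hf w hw).sub (hp w hw))
        hspec fun i n hn => by
          rw [iteratedDeriv_sub (hf _ (hspec i)).contDiffAt (hp _ (hspec i)).contDiffAt,
            hinterp _ n (by rwa [hlam, rootMultiplicity_prod_X_sub_C]), sub_self]
    rwa [divDiff_sub hUconv hf hp hspec, divDiff_eval_sum_C_mul_X_pow, sub_eq_zero] at hvan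
  exact ⟨hcorner, by rw [hcorner, pow_apply_last_zero hT, hdiv]⟩

/-- for an unreduced tridiagonal matrix `T` of order `m = k+1` with
eigenvalues `λ_1,…,λ_m` and `f(T) = Σ_{i=0}^{m−1} a_i T^i` the interpolating-polynomial
representation of the matrix function, the `(m,1)` entry of `f(T)` equals
`a_{m−1}` times the `(m,1)` entry of `T^{m−1}`, and
`e_mᵀ f(T) e_1 = f[λ_1,…,λ_m] · ∏_j t_{j+1,j}`. -/
theorem tridiag_corner_entry {k : ℕ} (T : Matrix (Fin (k + 1)) (Fin (k + 1)) ℂ)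
    (htri : ∀ i j : Fin (k + 1), ((j : ℕ) + 1 < (i : ℕ) ∨ (i : ℕ) + 1 < (j : ℕ)) → T i j = 0)
    (hsub : ∀ j : Fin k, T j.succ j.castSucc ≠ 0)
    (lam : Fin (k + 1) → ℂ)
    (hlam : T.charpoly = ∏ i, (Polynomial.X - Polynomial.C (lam i)))
    (f : ℂ → ℂ) (U : Set ℂ) (hU : IsOpen U) (hUconv : Convex ℝ U)
    (hspec : ∀ i, lam i ∈ U) (hf : ∀ w ∈ U, AnalyticAt ℂ f w)
    (a : Fin (k + 1) → ℂ) (fT : Matrix (Fin (k + 1)) (Fin (k + 1)) ℂ)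
    (hfT : fT = ∑ i : Fin (k + 1), a i • T ^ (i : ℕ))
    (hinterp : ∀ μ : ℂ, ∀ j < T.charpoly.rootMultiplicity μ,
      iteratedDeriv j
        (fun w => Polynomial.eval w (∑ i : Fin (k + 1), Polynomial.C (a i) * Polynomial.X ^ (i : ℕ))) μ
        = iteratedDeriv j f μ) :
    fT (Fin.last k) 0 = a (Fin.last k) * (T ^ k) (Fin.last k) 0
    ∧ fT (Fin.last k) 0 = divDiff f k lam * ∏ j : Fin k, T j.succ j.castSucc :=
  tridiag_corner_entry_general T htri lam hlam f U hUconv hspec hf a fT hfT hinterp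
end

section
/- Let A ∈ ℂ^{N×N} and let AV_m = V_m H_m + h_{m+1,m} v_{m+1} e_m^T be an Arnoldi decomposition with V_m having orthonormal columns, v_{m+1} a unit vector orthogonal to the columns of V_m, and H_m upper Hessenberg. For v = β V_m e_1 (β = ‖v‖), define w(t) = e^{−tA}v and w_m(t) = β V_m e^{−tH_m} e_1. Then the error E_m(t) = w(t) − w_m(t) satisfies E_m(τ) = −β h_{m+1,m} ∫_0^τ (e_m^T e^{−tH_m} e_1) e^{(t−τ)A} v_{m+1} dt. -/
/-!
With `G t = e^{(t-τ)A} V e^{-tH} x`, the product rule gives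
`G' t = e^{(t-τ)A} (A V - V H) e^{-tH} x`, so the fundamental theorem of calculus on `[0, τ]`
writes `e^{-τA} V x - V e^{-τH} x = G 0 - G τ` as an integral of this derivative. For an Arnoldi
decomposition `A V - V H = h v_{m+1} e_mᵀ` has rank one, which turns the integrand into
`h (e_mᵀ e^{-tH} x) e^{(t-τ)A} v_{m+1}`.
-/

open Matrix intervalIntegral

-- Any of Mathlib's matrix norms would do: they all induce the product topology.
attribute [local instance] Matrix.linftyOpNormedAddCommGroup Matrix.linftyOpNormedSpace
  Matrix.linftyOpNormedRing Matrix.linftyOpNormedAlgebra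

theorem HasDerivAt.mulVec {𝕜 : Type*} [NontriviallyNormedField 𝕜] [CompleteSpace 𝕜]
    {m n : Type*} [Fintype m] [Fintype n] {M : 𝕜 → Matrix m n 𝕜} {M' : Matrix m n 𝕜}
    {u : 𝕜 → n → 𝕜} {u' : n → 𝕜} {z : 𝕜} (hM : HasDerivAt M M' z) (hu : HasDerivAt u u' z) :
    HasDerivAt (fun y => M y *ᵥ u y) (M' *ᵥ u z + M z *ᵥ u') z := by
  classical
  let toCLM : Matrix m n 𝕜 ≃L[𝕜] ((n → 𝕜) →L[𝕜] (m → 𝕜)) :=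
    (Matrix.toLin'.trans LinearMap.toContinuousLinearMap).toContinuousLinearEquiv
  exact (toCLM.hasFDerivAt.comp_hasDerivAt z hM).clm_apply hu

theorem HasDerivAt.comp_ofReal' {E : Type*} [NormedAddCommGroup E] [NormedSpace ℂ E]
    {e : ℂ → E} {e' : E} {z : ℝ} (he : HasDerivAt e e' z) :
    HasDerivAt (fun y : ℝ => e y) e' z := by
  simpa [Function.comp_def] using
    (he.hasFDerivAt.restrictScalars ℝ).comp_hasDerivAt z Complex.ofRealCLM.hasDerivAt

open NormedSpace

section ExpDeriv

variable {𝕂 𝔸 : Type*} [RCLike 𝕂] [NormedRing 𝔸] [NormedAlgebra 𝕂 𝔸] [CompleteSpace 𝔸]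

theorem hasDerivAt_exp_sub_smul (a : 𝔸) (τ z : 𝕂) :
    HasDerivAt (fun y : 𝕂 => exp ((y - τ) • a)) (a * exp ((z - τ) • a)) z := by
  have h := (hasDerivAt_exp_smul_const' a (z - τ)).scomp z ((hasDerivAt_id z).sub_const τ)
  rwa [one_smul] at h

theorem hasDerivAt_exp_neg_smul (a : 𝔸) (z : 𝕂) :
    HasDerivAt (fun y : 𝕂 => exp (-y • a)) (-a * exp (-z • a)) z := by
  simpa only [smul_neg, ← neg_smul] using hasDerivAt_exp_smul_const' (-a) z

end ExpDeriv

section Duhamel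

variable {m n : Type*} [Fintype m] [Fintype n] [DecidableEq m] [DecidableEq n]

theorem exp_smul_mulVec_sub_mulVec_exp_smul (A : Matrix n n ℂ) (V : Matrix n m ℂ)
    (H : Matrix m m ℂ) (x : m → ℂ) (τ : ℝ) :
    exp (-(τ : ℂ) • A) *ᵥ (V *ᵥ x) - V *ᵥ (exp (-(τ : ℂ) • H) *ᵥ x) =
      -∫ t in (0 : ℝ)..τ,
        exp (((t : ℂ) - τ) • A) *ᵥ ((A * V - V * H) *ᵥ (exp (-(t : ℂ) • H) *ᵥ x)) := by
  set G : ℂ → n → ℂ := fun z => exp ((z - τ) • A) *ᵥ (V *ᵥ (exp (-z • H) *ᵥ x))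
  set g : ℂ → n → ℂ := fun z => exp ((z - τ) • A) *ᵥ ((A * V - V * H) *ᵥ (exp (-z • H) *ᵥ x))
  have hG : ∀ z : ℂ, HasDerivAt G (g z) z := by
    intro z
    have hE : HasDerivAt (fun y : ℂ => exp (-y • H)) (-H * exp (-z • H)) z :=
      hasDerivAt_exp_neg_smul H z
    have hM : HasDerivAt (fun y : ℂ => exp ((y - τ) • A)) (exp ((z - τ) • A) * A) z := by
      rw [← ((Commute.refl A).smul_right (z - τ)).exp_right.eq]
      exact hasDerivAt_exp_sub_smul A _ z
    refine (hM.mulVec ((hasDerivAt_const z V).mulVec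
      (hE.mulVec (hasDerivAt_const z x)))).congr_deriv ?_
    simp only [g, zero_mulVec, mulVec_zero, zero_add, add_zero, ← mulVec_mulVec, sub_eq_add_neg,
      add_mulVec, mulVec_add, neg_mulVec, mulVec_neg]
  have hcont : Continuous fun t : ℝ => g t := by fun_prop
  have hFTC : ∫ t in (0 : ℝ)..τ, g t = G τ - G ((0 : ℝ) : ℂ) :=
    integral_eq_sub_of_hasDerivAt (fun t _ => (hG t).comp_ofReal') (hcont.intervalIntegrable _ _)
  rw [hFTC]
  simp [G]

end Duhamel

theorem Matrix.vecMulVec_single_one_mulVec {R m n : Type*} [CommSemiring R] [Fintype n]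
    [DecidableEq n] (u : m → R) (i : n) (w : n → R) :
    vecMulVec u (Pi.single i 1) *ᵥ w = w i • u := by
  rw [vecMulVec_mulVec, single_one_dotProduct, op_smul_eq_smul]

theorem arnoldi_exp_error_integral_general {N k : ℕ}
    (A : Matrix (Fin N) (Fin N) ℂ)
    (V : Matrix (Fin N) (Fin (k + 1)) ℂ)
    (H : Matrix (Fin (k + 1)) (Fin (k + 1)) ℂ)
    (h : ℂ) (vnext : Fin N → ℂ)
    (hArnoldi : A * V = V * H + h • Matrix.vecMulVec vnext (Pi.single (Fin.last k) 1))
    (β : ℝ) (v : Fin N → ℂ)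
    (hv : v = (β : ℂ) • V.mulVec (Pi.single 0 1))
    (τ : ℝ) :
    (NormedSpace.exp (-(τ : ℂ) • A)).mulVec v
        - (β : ℂ) • V.mulVec ((NormedSpace.exp (-(τ : ℂ) • H)).mulVec (Pi.single 0 1))
      = (-((β : ℂ) * h)) •
          ∫ t in (0 : ℝ)..τ,
            (((NormedSpace.exp (-(t : ℂ) • H)).mulVec (Pi.single 0 1)) (Fin.last k)) •
              (NormedSpace.exp (((t : ℂ) - (τ : ℂ)) • A)).mulVec vnext := by
  have hresidual : A * V - V * H = h • vecMulVec vnext (Pi.single (Fin.last k) 1) :=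
    sub_eq_of_eq_add' hArnoldi
  have hintegrand : ∀ t : ℝ,
      exp (((t : ℂ) - τ) • A) *ᵥ ((A * V - V * H) *ᵥ (exp (-(t : ℂ) • H) *ᵥ Pi.single 0 1)) =
        h • ((exp (-(t : ℂ) • H) *ᵥ Pi.single 0 1) (Fin.last k) •
          exp (((t : ℂ) - τ) • A) *ᵥ vnext) := by
    intro t
    rw [hresidual, smul_mulVec, vecMulVec_single_one_mulVec, mulVec_smul, mulVec_smul]
  rw [hv, mulVec_smul, ← smul_sub, exp_smul_mulVec_sub_mulVec_exp_smul, integral_congr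
    (fun t _ => hintegrand t), intervalIntegral.integral_smul, smul_neg, smul_smul, neg_smul]

/-- integral representation of the error of the Arnoldi approximation
to `e^{−τA} v`:  with `A V = V H + h v_{m+1} e_mᵀ` an Arnoldi decomposition
(`m = k+1`), `v = β V e_1`, `w(t) = e^{−tA}v`, `w_m(t) = β V e^{−tH} e_1`, one has
`w(τ) − w_m(τ) = −β h ∫_0^τ (e_mᵀ e^{−tH} e_1) e^{(t−τ)A} v_{m+1} dt`. -/
theorem arnoldi_exp_error_integral {N k : ℕ}
    (A : Matrix (Fin N) (Fin N) ℂ)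
    (V : Matrix (Fin N) (Fin (k + 1)) ℂ)
    (H : Matrix (Fin (k + 1)) (Fin (k + 1)) ℂ)
    (h : ℂ) (vnext : Fin N → ℂ)
    (horth : Vᴴ * V = 1)
    (hvnext_unit : star vnext ⬝ᵥ vnext = 1)
    (hvnext_orth : Vᴴ.mulVec vnext = 0)
    (hHess : ∀ i j : Fin (k + 1), (j : ℕ) + 1 < (i : ℕ) → H i j = 0)
    (hArnoldi : A * V = V * H + h • Matrix.vecMulVec vnext (Pi.single (Fin.last k) 1))
    (β : ℝ) (hβ : 0 ≤ β) (v : Fin N → ℂ)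
    (hv : v = (β : ℂ) • V.mulVec (Pi.single 0 1))
    (τ : ℝ) :
    (NormedSpace.exp (-(τ : ℂ) • A)).mulVec v
        - (β : ℂ) • V.mulVec ((NormedSpace.exp (-(τ : ℂ) • H)).mulVec (Pi.single 0 1))
      = (-((β : ℂ) * h)) •
          ∫ t in (0 : ℝ)..τ,
            (((NormedSpace.exp (-(t : ℂ) • H)).mulVec (Pi.single 0 1)) (Fin.last k)) •
              (NormedSpace.exp (((t : ℂ) - (τ : ℂ)) • A)).mulVec vnext :=
  arnoldi_exp_error_integral_general A V H h vnext hArnoldi β v hv τ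
end

section
/- With the setup of an Arnoldi decomposition AV_m = V_m H_m + h_{m+1,m} v_{m+1} e_m^T with ‖v_{m+1}‖ = 1, v = β V_m e_1, and τ > 0, the error E_m(τ) = e^{−τA}v − β V_m e^{−τH_m} e_1 satisfies ‖E_m(τ)‖ ≤ τ β h_{m+1,m} · max_{0≤t≤τ} |e_m^T e^{−tH_m} e_1| · (e^{τμ₂} − 1)/(τμ₂), where μ₂ = μ₂[−A] = λ_max(−(A+A*)/2). -/
open Matrix

noncomputable def enorm2 {n : ℕ} (x : Fin n → ℂ) : ℝ :=
  Real.sqrt (∑ i, ‖x i‖ ^ 2)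

/-!
The error `E(t) = e^{-tA} v - β V e^{-tH} e₁` vanishes at `t = 0`, and the Arnoldi relation shows
that it solves `E' = -A E - β h (e^{-tH} e₁)ₘ v_{m+1}`: the Krylov approximation satisfies the
same equation up to the rank-one defect `h v_{m+1} e_mᵀ`. Since `Re ⟨x, -A x⟩` is the Rayleigh
quotient of the Hermitian part of `-A`, it is at most `μ₂ ‖x‖²`; hence `‖E‖` grows at rate at most
`μ₂ ‖E‖ + β h max_t |(e^{-tH} e₁)ₘ|`, and Gronwall's inequality gives the bound.
-/

open Set Filter Topology NormedSpace
open scoped InnerProductSpace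

theorem LinearMap.IsSymmetric.re_inner_apply_self_le_iSup_eigenvalues
    {𝕜 E : Type*} [RCLike 𝕜] [NormedAddCommGroup E] [InnerProductSpace 𝕜 E]
    [FiniteDimensional 𝕜 E] {T : E →ₗ[𝕜] E} (hT : T.IsSymmetric) {n : ℕ}
    (hn : Module.finrank 𝕜 E = n) (x : E) :
    RCLike.re ⟪x, T x⟫_𝕜 ≤ (⨆ i, hT.eigenvalues hn i) * ‖x‖ ^ 2 := by
  set b := hT.eigenvectorBasis hn
  have hre : RCLike.re ⟪x, T x⟫_𝕜 = ∑ i, hT.eigenvalues hn i * ‖b.repr x i‖ ^ 2 := by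
    rw [← b.repr.inner_map_map, PiLp.inner_apply, map_sum]
    refine Finset.sum_congr rfl fun i _ => ?_
    rw [hT.eigenvectorBasis_apply_self_apply, ← smul_eq_mul, inner_smul_right,
      inner_self_eq_norm_sq_to_K]
    norm_cast
  rw [hre, ← b.repr.norm_map, EuclideanSpace.norm_sq_eq, Finset.mul_sum]
  exact Finset.sum_le_sum fun i _ =>
    mul_le_mul_of_nonneg_right (le_ciSup (Finite.bddAbove_range _) i) (by positivity)

theorem EuclideanSpace.real_inner_eq_re_inner {n : Type*} [Fintype n]
    (x y : EuclideanSpace ℂ n) : ⟪x, y⟫_ℝ = RCLike.re ⟪x, y⟫_ℂ := by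
  simp only [PiLp.inner_apply, map_sum]
  rfl

namespace Matrix

variable {𝕜 n : Type*} [RCLike 𝕜] [Fintype n] [DecidableEq n]

theorem IsHermitian.re_inner_mulVec_le_iSup_eigenvalues {S : Matrix n n 𝕜}
    (hS : S.IsHermitian) (x : EuclideanSpace 𝕜 n) :
    RCLike.re ⟪x, WithLp.toLp 2 (S *ᵥ x)⟫_𝕜 ≤ (⨆ i, hS.eigenvalues i) * ‖x‖ ^ 2 := by
  have h := (isSymmetric_toEuclideanLin_iff.mpr hS).re_inner_apply_self_le_iSup_eigenvalues
    finrank_euclideanSpace x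
  rwa [← (Fintype.equivOfCardEq (Fintype.card_fin _)).symm.iSup_comp] at h

theorem inner_conjTranspose_mulVec (A : Matrix n n 𝕜) (x : EuclideanSpace 𝕜 n) :
    ⟪x, WithLp.toLp 2 (Aᴴ *ᵥ x)⟫_𝕜 = ⟪WithLp.toLp 2 (A *ᵥ x), x⟫_𝕜 := by
  rw [← toLpLin_apply, ← toLpLin_apply, toEuclideanLin_conjTranspose_eq_adjoint,
    LinearMap.adjoint_inner_right]

theorem re_inner_neg_mulVec_le_iSup_eigenvalues (A : Matrix n n 𝕜)
    (hS : (-(((1 : 𝕜) / 2) • (A + Aᴴ))).IsHermitian) (x : EuclideanSpace 𝕜 n) :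
    RCLike.re ⟪x, WithLp.toLp 2 (-(A *ᵥ x))⟫_𝕜 ≤ (⨆ i, hS.eigenvalues i) * ‖x‖ ^ 2 := by
  have hsym : RCLike.re ⟪x, WithLp.toLp 2 ((-(((1 : 𝕜) / 2) • (A + Aᴴ))) *ᵥ x)⟫_𝕜 =
      RCLike.re ⟪x, WithLp.toLp 2 (-(A *ᵥ x))⟫_𝕜 := by
    simp only [neg_mulVec, smul_mulVec, add_mulVec, WithLp.toLp_neg, WithLp.toLp_smul,
      WithLp.toLp_add, inner_neg_right, inner_smul_right, inner_add_right,
      inner_conjTranspose_mulVec]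
    rw [show (1 / 2 : 𝕜) = ((1 / 2 : ℝ) : 𝕜) by push_cast; ring, map_neg, map_neg,
      RCLike.re_ofReal_mul, map_add, inner_re_symm (WithLp.toLp 2 _)]
    ring
  exact hsym ▸ hS.re_inner_mulVec_le_iSup_eigenvalues x

theorem real_inner_neg_mulVec_sub_smul_le (A : Matrix n n ℂ)
    (hS : (-(((1 : ℂ) / 2) • (A + Aᴴ))).IsHermitian) (x w : EuclideanSpace ℂ n) (c : ℂ) :
    ⟪x, WithLp.toLp 2 (-(A *ᵥ x)) - c • w⟫_ℝ
      ≤ (⨆ i, hS.eigenvalues i) * ‖x‖ ^ 2 + ‖c‖ * ‖w‖ * ‖x‖ := by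
  have hA : ⟪x, WithLp.toLp 2 (-(A *ᵥ x))⟫_ℝ ≤ (⨆ i, hS.eigenvalues i) * ‖x‖ ^ 2 :=
    EuclideanSpace.real_inner_eq_re_inner x _ ▸ re_inner_neg_mulVec_le_iSup_eigenvalues A hS x
  have hw : |⟪x, c • w⟫_ℝ| ≤ ‖x‖ * (‖c‖ * ‖w‖) :=
    norm_smul c w ▸ abs_real_inner_le_norm x (c • w)
  rw [inner_sub_right]
  linarith [neg_abs_le ⟪x, c • w⟫_ℝ]

end Matrix

section Gronwall

variable {F : Type*} [NormedAddCommGroup F] [InnerProductSpace ℝ F]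

/-- `‖f‖` need not be differentiable where `f` vanishes, so Gronwall's inequality is applied to
the smooth majorant `√(‖f‖² + η²)`; the price is the extra slope `|K| η`. -/
theorem sqrt_norm_sq_add_sq_le_gronwallBound {f f' : ℝ → F} {δ K ε η a b : ℝ} (hε : 0 ≤ ε)
    (hη : 0 < η) (hf : ContinuousOn f (Icc a b))
    (hf' : ∀ x ∈ Ico a b, HasDerivWithinAt f (f' x) (Ici x) x) (ha : ‖f a‖ ≤ δ)
    (bound : ∀ x ∈ Ico a b, ⟪f x, f' x⟫_ℝ ≤ K * ‖f x‖ ^ 2 + ε * ‖f x‖) :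
    ∀ x ∈ Icc a b, √(‖f x‖ ^ 2 + η ^ 2) ≤ gronwallBound (δ + η) K (ε + |K| * η) (x - a) := by
  set g : ℝ → ℝ := fun x => √(‖f x‖ ^ 2 + η ^ 2)
  have hpos : ∀ x, 0 < ‖f x‖ ^ 2 + η ^ 2 := fun x => by positivity
  have hg_sq : ∀ x, g x ^ 2 = ‖f x‖ ^ 2 + η ^ 2 := fun x => Real.sq_sqrt (hpos x).le
  have hg_pos : ∀ x, 0 < g x := fun x => Real.sqrt_pos.2 (hpos x)
  have hfg : ∀ x, ‖f x‖ ≤ g x := fun x => Real.le_sqrt_of_sq_le (by nlinarith)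
  have hηg : ∀ x, η ≤ g x := fun x => Real.le_sqrt_of_sq_le (by nlinarith [sq_nonneg ‖f x‖])
  have hg' : ∀ x ∈ Ico a b, HasDerivWithinAt g (⟪f x, f' x⟫_ℝ / g x) (Ici x) x := fun x hx =>
    (((hf' x hx).norm_sq.add_const (η ^ 2)).sqrt (hpos x).ne').congr_deriv
      (mul_div_mul_left _ _ two_ne_zero)
  -- `K ‖f‖² = K g² - K η² ≤ K g² + |K| η g` and `ε ‖f‖ ≤ ε g`
  have hg_bound : ∀ x ∈ Ico a b, ⟪f x, f' x⟫_ℝ / g x ≤ K * g x + (ε + |K| * η) := by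
    intro x hx
    rw [div_le_iff₀ (hg_pos x)]
    nlinarith [bound x hx, hg_sq x, hfg x, hηg x, norm_nonneg (f x), abs_nonneg K,
      le_abs_self K, neg_abs_le K,
      mul_nonneg (abs_nonneg K) (mul_nonneg hη.le (sub_nonneg.2 (hηg x))),
      mul_nonneg hε (sub_nonneg.2 (hfg x))]
  have hga : g a ≤ δ + η :=
    Real.sqrt_le_iff.2 ⟨by linarith [norm_nonneg (f a)], by nlinarith [norm_nonneg (f a)]⟩
  exact le_gronwallBound_of_liminf_deriv_right_le
    ((hf.norm.pow 2).add continuousOn_const).sqrt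
    (fun x hx _ hr => (hg' x hx).liminf_right_slope_le hr) hga hg_bound

theorem norm_le_gronwallBound_of_inner_deriv_right_le {f f' : ℝ → F} {δ K ε a b : ℝ}
    (hε : 0 ≤ ε) (hf : ContinuousOn f (Icc a b))
    (hf' : ∀ x ∈ Ico a b, HasDerivWithinAt f (f' x) (Ici x) x) (ha : ‖f a‖ ≤ δ)
    (bound : ∀ x ∈ Ico a b, ⟪f x, f' x⟫_ℝ ≤ K * ‖f x‖ ^ 2 + ε * ‖f x‖) :
    ∀ x ∈ Icc a b, ‖f x‖ ≤ gronwallBound δ K ε (x - a) := by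
  intro x hx
  have hcont : Continuous fun η => gronwallBound (δ + η) K (ε + |K| * η) (x - a) := by
    unfold gronwallBound
    split_ifs <;> fun_prop
  have hlim : Tendsto (fun η => gronwallBound (δ + η) K (ε + |K| * η) (x - a)) (𝓝[>] 0)
      (𝓝 (gronwallBound δ K ε (x - a))) := by
    simpa using (hcont.tendsto 0).mono_left nhdsWithin_le_nhds
  refine ge_of_tendsto hlim (eventually_nhdsWithin_of_forall fun η hη => ?_)
  calc ‖f x‖ ≤ √(‖f x‖ ^ 2 + η ^ 2) := Real.le_sqrt_of_sq_le (by nlinarith)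
    _ ≤ _ := sqrt_norm_sq_add_sq_le_gronwallBound hε hη hf hf' ha bound x hx

theorem gronwallBound_δ0 (K ε : ℝ) {x : ℝ} (hx : x ≠ 0) :
    gronwallBound 0 K ε x =
      x * ε * (if K = 0 then 1 else (Real.exp (x * K) - 1) / (x * K)) := by
  split_ifs with hK
  · simp [hK, gronwallBound_K0, mul_comm]
  · rw [gronwallBound_of_K_ne_0 hK]
    field_simp
    ring

end Gronwall

section MatrixExponential

attribute [local instance] Matrix.linftyOpNormedRing Matrix.linftyOpNormedAlgebra

variable {𝕜 m n : Type*} [RCLike 𝕜] [Fintype m] [DecidableEq m] [Fintype n] [DecidableEq n]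

theorem Matrix.hasDerivAt_exp_neg_smul_mulVec (B : Matrix m m 𝕜) (u : m → 𝕜) (t : ℝ) :
    HasDerivAt (fun t : ℝ => exp (-(t : 𝕜) • B) *ᵥ u) (-(B *ᵥ (exp (-(t : 𝕜) • B) *ᵥ u))) t := by
  have hexp : ∀ s : ℝ, exp (-(s : 𝕜) • B) = exp (s • -B) := fun s => by
    rw [RCLike.real_smul_eq_coe_smul (K := 𝕜), smul_neg, neg_smul]
  have hmulVec :=
    (((mulVecBilin 𝕜 𝕜).flip u).restrictScalars ℝ).toContinuousLinearMap.hasFDerivAt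
      (x := exp (t • -B))
  simp only [hexp]
  refine (hmulVec.comp_hasDerivAt t (hasDerivAt_exp_smul_const' (-B) t)).congr_deriv ?_
  change (-B * exp (t • -B)) *ᵥ u = _
  rw [neg_mul, neg_mulVec, mulVec_mulVec]

theorem Matrix.continuous_exp_neg_smul_mulVec (B : Matrix m m 𝕜) (u : m → 𝕜) :
    Continuous fun t : ℝ => exp (-(t : 𝕜) • B) *ᵥ u :=
  continuous_iff_continuousAt.2 fun t => (hasDerivAt_exp_neg_smul_mulVec B u t).continuousAt

theorem Matrix.hasDerivAt_exp_neg_smul_mulVec_sub {A : Matrix n n 𝕜} {V R : Matrix n m 𝕜}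
    {H : Matrix m m 𝕜} (hAVH : A * V = V * H + R) (u : m → 𝕜) (t : ℝ) :
    HasDerivAt (fun t : ℝ => exp (-(t : 𝕜) • A) *ᵥ (V *ᵥ u) - V *ᵥ (exp (-(t : 𝕜) • H) *ᵥ u))
      (-(A *ᵥ (exp (-(t : 𝕜) • A) *ᵥ (V *ᵥ u) - V *ᵥ (exp (-(t : 𝕜) • H) *ᵥ u)))
        - R *ᵥ (exp (-(t : 𝕜) • H) *ᵥ u)) t := by
  have hV := (V.mulVecLin.restrictScalars ℝ).toContinuousLinearMap.hasFDerivAt.comp_hasDerivAt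
    t (hasDerivAt_exp_neg_smul_mulVec H u t)
  refine ((hasDerivAt_exp_neg_smul_mulVec A (V *ᵥ u) t).sub hV).congr_deriv ?_
  change _ - V *ᵥ _ = _
  rw [mulVec_sub, mulVec_neg, mulVec_mulVec _ A V, hAVH, add_mulVec, ← mulVec_mulVec]
  abel

end MatrixExponential

theorem HasDerivAt.toLp_euclidean {ι 𝕜 : Type*} [Fintype ι] [RCLike 𝕜] {f : ℝ → ι → 𝕜}
    {f' : ι → 𝕜} {t : ℝ} (hf : HasDerivAt f f' t) :
    HasDerivAt (fun t => WithLp.toLp 2 (f t) : ℝ → EuclideanSpace 𝕜 ι) (WithLp.toLp 2 f') t :=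
  (PiLp.continuousLinearEquiv 2 ℝ (fun _ : ι => 𝕜)).symm.hasFDerivAt.comp_hasDerivAt t hf

theorem hasDerivAt_arnoldi_error {N k : ℕ} {A : Matrix (Fin N) (Fin N) ℂ}
    {V : Matrix (Fin N) (Fin (k + 1)) ℂ} {H : Matrix (Fin (k + 1)) (Fin (k + 1)) ℂ} {h : ℂ}
    {vnext : Fin N → ℂ}
    (hArnoldi : A * V = V * H + h • vecMulVec vnext (Pi.single (Fin.last k) 1))
    (u : Fin (k + 1) → ℂ) (t : ℝ) :
    HasDerivAt (fun t : ℝ => WithLp.toLp 2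
        (exp (-(t : ℂ) • A) *ᵥ (V *ᵥ u) - V *ᵥ (exp (-(t : ℂ) • H) *ᵥ u)) :
        ℝ → EuclideanSpace ℂ (Fin N))
      (WithLp.toLp 2
          (-(A *ᵥ (exp (-(t : ℂ) • A) *ᵥ (V *ᵥ u) - V *ᵥ (exp (-(t : ℂ) • H) *ᵥ u))))
        - (h * (exp (-(t : ℂ) • H) *ᵥ u) (Fin.last k)) • WithLp.toLp 2 vnext) t := by
  refine (hasDerivAt_exp_neg_smul_mulVec_sub hArnoldi u t).toLp_euclidean.congr_deriv ?_
  rw [smul_mulVec, vecMulVec_mulVec, op_smul_eq_smul, single_one_dotProduct, smul_smul,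
    WithLp.toLp_sub, WithLp.toLp_smul]
  rfl

theorem le_iSup_Icc_of_continuousOn {g : ℝ → ℝ} {a b s : ℝ} (hg : ContinuousOn g (Icc a b))
    (hs : s ∈ Icc a b) : g s ≤ ⨆ t : Icc a b, g t :=
  le_ciSup (by simpa [image_eq_range] using isCompact_Icc.bddAbove_image hg)
    (⟨s, hs⟩ : Icc a b)

theorem arnoldi_exp_error_bound_general {N k : ℕ}
    (A : Matrix (Fin N) (Fin N) ℂ)
    (V : Matrix (Fin N) (Fin (k + 1)) ℂ)
    (H : Matrix (Fin (k + 1)) (Fin (k + 1)) ℂ)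
    (h : ℝ) (hh : 0 ≤ h) (vnext : Fin N → ℂ)
    (hvnext_unit : star vnext ⬝ᵥ vnext = 1)
    (hArnoldi : A * V = V * H + (h : ℂ) • Matrix.vecMulVec vnext (Pi.single (Fin.last k) 1))
    (β : ℝ) (hβ : 0 ≤ β) (v : Fin N → ℂ)
    (hv : v = (β : ℂ) • V.mulVec (Pi.single 0 1))
    (τ : ℝ) (hτ : 0 < τ)
    (hHerm : (-(((1 : ℂ) / 2) • (A + Aᴴ))).IsHermitian) :
    enorm2 ((NormedSpace.exp (-(τ : ℂ) • A)).mulVec v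
        - (β : ℂ) • V.mulVec ((NormedSpace.exp (-(τ : ℂ) • H)).mulVec (Pi.single 0 1)))
      ≤ τ * β * h *
          (⨆ t : Set.Icc (0 : ℝ) τ,
            ‖((NormedSpace.exp (-((t : ℝ) : ℂ) • H)).mulVec (Pi.single 0 1)) (Fin.last k)‖) *
          (if (⨆ i, hHerm.eigenvalues i) = 0 then 1
           else (Real.exp (τ * ⨆ i, hHerm.eigenvalues i) - 1) / (τ * ⨆ i, hHerm.eigenvalues i)) := by
  set e₁ : Fin (k + 1) → ℂ := Pi.single 0 1
  set M := ⨆ t : Icc (0 : ℝ) τ, ‖(exp (-((t : ℝ) : ℂ) • H) *ᵥ e₁) (Fin.last k)‖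
  set E : ℝ → EuclideanSpace ℂ (Fin N) := fun t => WithLp.toLp 2
    (exp (-(t : ℂ) • A) *ᵥ (V *ᵥ ((β : ℂ) • e₁)) - V *ᵥ (exp (-(t : ℂ) • H) *ᵥ ((β : ℂ) • e₁)))
  have hE := hasDerivAt_arnoldi_error hArnoldi ((β : ℂ) • e₁)
  have hM : ∀ t ∈ Icc 0 τ, ‖(exp (-(t : ℂ) • H) *ᵥ e₁) (Fin.last k)‖ ≤ M := fun t ht =>
    le_iSup_Icc_of_continuousOn
      ((continuous_apply _).comp (continuous_exp_neg_smul_mulVec H e₁)).norm.continuousOn ht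
  have hvnext : ‖(WithLp.toLp 2 vnext : EuclideanSpace ℂ (Fin N))‖ = 1 := by
    rw [@norm_eq_sqrt_re_inner ℂ, EuclideanSpace.inner_toLp_toLp, dotProduct_comm, hvnext_unit]
    simp
  have hbound : ∀ t ∈ Ico 0 τ, ⟪E t, WithLp.toLp 2 (-(A *ᵥ E t))
      - ((h : ℂ) * (exp (-(t : ℂ) • H) *ᵥ ((β : ℂ) • e₁)) (Fin.last k)) • WithLp.toLp 2 vnext⟫_ℝ
      ≤ (⨆ i, hHerm.eigenvalues i) * ‖E t‖ ^ 2 + β * h * M * ‖E t‖ := fun t ht => by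
    refine (Matrix.real_inner_neg_mulVec_sub_smul_le A hHerm _ _ _).trans ?_
    rw [hvnext, mul_one, mulVec_smul, Pi.smul_apply, smul_eq_mul, norm_mul, norm_mul,
      Complex.norm_real, Complex.norm_real, Real.norm_of_nonneg hh, Real.norm_of_nonneg hβ,
      ← mul_assoc, mul_comm h β]
    gcongr
    exact hM t (Ico_subset_Icc_self ht)
  have hgron := norm_le_gronwallBound_of_inner_deriv_right_le (δ := 0)
    (mul_nonneg (mul_nonneg hβ hh) ((norm_nonneg _).trans (hM 0 ⟨le_rfl, hτ.le⟩)))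
    (fun t _ => (hE t).continuousAt.continuousWithinAt) (fun t _ => (hE t).hasDerivWithinAt)
    (by simp) hbound τ ⟨hτ.le, le_rfl⟩
  rw [sub_zero, gronwallBound_δ0 _ _ hτ.ne'] at hgron
  calc _ = ‖E τ‖ := by
        rw [enorm2, EuclideanSpace.norm_eq]
        simp [E, hv, mulVec_smul]
    _ ≤ _ := hgron
    _ = _ := by ring

/-- a posteriori bound for the Arnoldi approximation to `e^{−τA}v`:
`‖E_m(τ)‖ ≤ τ β h_{m+1,m} · max_{0≤t≤τ} |e_mᵀ e^{−tH} e_1| · (e^{τμ₂} − 1)/(τμ₂)`,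
where `μ₂ = μ₂[−A] = λ_max(−(A+A*)/2)` and the last factor is `1` when `μ₂ = 0`. -/
theorem arnoldi_exp_error_bound {N k : ℕ}
    (A : Matrix (Fin N) (Fin N) ℂ)
    (V : Matrix (Fin N) (Fin (k + 1)) ℂ)
    (H : Matrix (Fin (k + 1)) (Fin (k + 1)) ℂ)
    (h : ℝ) (hh : 0 ≤ h) (vnext : Fin N → ℂ)
    (horth : Vᴴ * V = 1)
    (hvnext_unit : star vnext ⬝ᵥ vnext = 1)
    (hvnext_orth : Vᴴ.mulVec vnext = 0)
    (hHess : ∀ i j : Fin (k + 1), (j : ℕ) + 1 < (i : ℕ) → H i j = 0)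
    (hArnoldi : A * V = V * H + (h : ℂ) • Matrix.vecMulVec vnext (Pi.single (Fin.last k) 1))
    (β : ℝ) (hβ : 0 ≤ β) (v : Fin N → ℂ)
    (hv : v = (β : ℂ) • V.mulVec (Pi.single 0 1))
    (τ : ℝ) (hτ : 0 < τ)
    (hHerm : (-(((1 : ℂ) / 2) • (A + Aᴴ))).IsHermitian) :
    enorm2 ((NormedSpace.exp (-(τ : ℂ) • A)).mulVec v
        - (β : ℂ) • V.mulVec ((NormedSpace.exp (-(τ : ℂ) • H)).mulVec (Pi.single 0 1)))
      ≤ τ * β * h *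
          (⨆ t : Set.Icc (0 : ℝ) τ,
            ‖((NormedSpace.exp (-((t : ℝ) : ℂ) • H)).mulVec (Pi.single 0 1)) (Fin.last k)‖) *
          (if (⨆ i, hHerm.eigenvalues i) = 0 then 1
           else (Real.exp (τ * ⨆ i, hHerm.eigenvalues i) - 1) / (τ * ⨆ i, hHerm.eigenvalues i)) :=
  arnoldi_exp_error_bound_general A V H h hh vnext hvnext_unit hArnoldi β hβ v hv τ hτ hHerm
end

section
/- Let f be analytic on a closed convex set Ω containing the fields of values F(A) and F(K), where AW = WK + w k^T is a Krylov-like decomposition (A ∈ ℂ^{N×N}, W ∈ ℂ^{N×n}, K ∈ ℂ^{n×n}, w ∈ ℂ^N, k ∈ ℂ^n), and let b̂ ∈ ℂ^n with Wb̂ = v. Fix nodes z_0, ..., z_{j−1} ∈ Ω and define φ_0 = f, φ_{i+1}(z) = (φ_i(z) − φ_i(z_i))/(z − z_i), q_0 = 1, q_i(z) = (z − z_0)···(z − z_{i−1}), and s^{(i)} = φ_i(A)v − W φ_i(K) b̂. Then for every j ≥ 1, f(A)v − W f(K) b̂ = Σ_{i=1}^{j} (k^T φ_i(K) b̂) q_{i−1}(A)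 w + q_j(A) s^{(j)}. -/
open Matrix

/-- The recursively defined functions `φ_k`:  `φ_0 = f`,
`φ_{k+1}(z) = (φ_k(z) − φ_k(z_k))/(z − z_k)`, extended by continuity (i.e. by the
derivative) at `z = z_k`. -/
noncomputable def phiSeq (f : ℂ → ℂ) (zs : ℕ → ℂ) : ℕ → ℂ → ℂ
  | 0 => f
  | (k + 1) => fun z =>
      if z = zs k then deriv (phiSeq f zs k) (zs k)
      else (phiSeq f zs k z - phiSeq f zs k (zs k)) / (z - zs k)

/-- `q_i(A) = (A − z_0 I)(A − z_1 I)⋯(A − z_{i−1} I)`. -/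
noncomputable def qProd {n : ℕ} (A : Matrix (Fin n) (Fin n) ℂ) (z : ℕ → ℂ) (i : ℕ) :
    Matrix (Fin n) (Fin n) ℂ :=
  ((List.range i).map (fun l => A - z l • (1 : Matrix (Fin n) (Fin n) ℂ))).prod

/-- finite error expansion with remainder for the Krylov-like
approximation.  Here `ΦA i`, `ΦK i` play the role of the matrix functions
`φ_i(A)`, `φ_i(K)`, characterized by the functional identities
`φ_i(M) = φ_i(z_i) I + (M − z_i I) φ_{i+1}(M)` lifted from the scalar recurrence,
and `s^{(i)} = φ_i(A)v − W φ_i(K) b̂`. Then for every `j ≥ 1`,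
`f(A)v − W f(K) b̂ = Σ_{i=1}^{j} (kᵀ φ_i(K) b̂) q_{i−1}(A) w + q_j(A) s^{(j)}`. -/
theorem krylov_like_finite_expansion {N n : ℕ}
    (A : Matrix (Fin N) (Fin N) ℂ) (W : Matrix (Fin N) (Fin n) ℂ)
    (K : Matrix (Fin n) (Fin n) ℂ) (w : Fin N → ℂ) (kvec : Fin n → ℂ)
    (hKry : A * W = W * K + Matrix.vecMulVec w kvec)
    (v : Fin N → ℂ) (b : Fin n → ℂ) (hb : W.mulVec b = v)
    (f : ℂ → ℂ) (Ω U : Set ℂ) (hΩclosed : IsClosed Ω) (hΩconv : Convex ℝ Ω)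
    (hFA : ∀ x : Fin N → ℂ, (∑ i, ‖x i‖ ^ 2) = 1 → star x ⬝ᵥ A.mulVec x ∈ Ω)
    (hFK : ∀ x : Fin n → ℂ, (∑ i, ‖x i‖ ^ 2) = 1 → star x ⬝ᵥ K.mulVec x ∈ Ω)
    (hU : IsOpen U) (hΩU : Ω ⊆ U) (hf : ∀ ζ ∈ U, AnalyticAt ℂ f ζ)
    (z : ℕ → ℂ) (hz : ∀ i, z i ∈ Ω)
    (ΦA : ℕ → Matrix (Fin N) (Fin N) ℂ) (ΦK : ℕ → Matrix (Fin n) (Fin n) ℂ)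
    (hΦA : ∀ i : ℕ, ΦA i
      = phiSeq f z i (z i) • (1 : Matrix (Fin N) (Fin N) ℂ)
        + (A - z i • (1 : Matrix (Fin N) (Fin N) ℂ)) * ΦA (i + 1))
    (hΦK : ∀ i : ℕ, ΦK i
      = phiSeq f z i (z i) • (1 : Matrix (Fin n) (Fin n) ℂ)
        + (K - z i • (1 : Matrix (Fin n) (Fin n) ℂ)) * ΦK (i + 1))
    (j : ℕ) (hj : 1 ≤ j) :
    (ΦA 0).mulVec v - W.mulVec ((ΦK 0).mulVec b)
      = (∑ i ∈ Finset.range j,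
          (kvec ⬝ᵥ (ΦK (i + 1)).mulVec b) • (qProd A z i).mulVec w)
        + (qProd A z j).mulVec ((ΦA j).mulVec v - W.mulVec ((ΦK j).mulVec b)) := by

  clear hj
  -- one-step recurrence for the remainder
  have step : ∀ i : ℕ,
      (ΦA i).mulVec v - W.mulVec ((ΦK i).mulVec b)
        = (kvec ⬝ᵥ (ΦK (i + 1)).mulVec b) • w
          + (A - z i • (1 : Matrix (Fin N) (Fin N) ℂ)).mulVec
              ((ΦA (i + 1)).mulVec v - W.mulVec ((ΦK (i + 1)).mulVec b)) := by
    intro i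
    have hWK : W * (K - z i • (1 : Matrix (Fin n) (Fin n) ℂ))
        = (A - z i • (1 : Matrix (Fin N) (Fin N) ℂ)) * W - Matrix.vecMulVec w kvec := by
      rw [Matrix.mul_sub, Matrix.sub_mul, hKry]
      simp [Matrix.mul_smul, Matrix.smul_mul]
      abel
    have hA1 : (ΦA i).mulVec v
        = phiSeq f z i (z i) • v
          + (A - z i • (1 : Matrix (Fin N) (Fin N) ℂ)).mulVec ((ΦA (i + 1)).mulVec v) := by
      rw [hΦA i]
      simp [Matrix.add_mulVec, Matrix.smul_mulVec, Matrix.one_mulVec,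
        Matrix.mulVec_mulVec]
    have hK1 : W.mulVec ((ΦK i).mulVec b)
        = phiSeq f z i (z i) • v
          + (A - z i • (1 : Matrix (Fin N) (Fin N) ℂ)).mulVec
              (W.mulVec ((ΦK (i + 1)).mulVec b))
          - (kvec ⬝ᵥ (ΦK (i + 1)).mulVec b) • w := by
      rw [hΦK i]
      have key : ∀ x : Fin n → ℂ,
          W.mulVec ((K - z i • (1 : Matrix (Fin n) (Fin n) ℂ)).mulVec x)
            = (A - z i • (1 : Matrix (Fin N) (Fin N) ℂ)).mulVec (W.mulVec x)
              - (kvec ⬝ᵥ x) • w := by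
        intro x
        rw [Matrix.mulVec_mulVec, hWK, Matrix.sub_mulVec, Matrix.mulVec_mulVec]
        congr 1
        ext r
        simp [Matrix.vecMulVec, Matrix.mulVec, dotProduct, Finset.mul_sum,
          mul_assoc]
        rw [Finset.sum_mul]
        exact Finset.sum_congr rfl fun t _ => by ring
      rw [Matrix.add_mulVec, Matrix.mulVec_add, Matrix.smul_mulVec,
        Matrix.one_mulVec, Matrix.mulVec_smul, hb, ← Matrix.mulVec_mulVec,
        key (((ΦK (i+1)).mulVec b))]
      abel
    rw [hA1, hK1, Matrix.mulVec_sub]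
    abel
  have hq : ∀ i : ℕ, qProd A z (i + 1)
      = qProd A z i * (A - z i • (1 : Matrix (Fin N) (Fin N) ℂ)) := by
    intro i
    simp [qProd, List.range_succ]
  induction j with
  | zero =>
      simp [qProd, Matrix.one_mulVec]
  | succ j ih =>
      rw [ih, Finset.sum_range_succ]
      rw [step j, Matrix.mulVec_add, Matrix.mulVec_smul, hq j, ← Matrix.mulVec_mulVec]
      abel
end
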